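/- arXiv:1401.3941 — 8 statements merged into one kernel-verified Lean document; each statement's English description precedes it below -/
import Mathlib

section
/- Every k-source n-terminal sum-network G has exactly one basic region decomposition, and hence exactly one basic region graph. -/
namespace SumNetworksPaper

/-- A `k`-source `n`-terminal sum-network, modelled by its (finite, acyclic)
set of links `E`.  `Inc e' e` means that `e'` is an incoming link of `e`
(i.e. `tail e = head e'`).  `src i` is the imaginary `X_i` source link (it has
no incoming link) and `tml j` is the imaginary terminal link of terminal `t_j`
(it has no outgoing link).  Every link which is not a source link has a tail
inside the network and hence at least one incoming link. -/
structure SumNetwork (k n : ℕ) where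
  E : Type
  fintypeE : Fintype E
  Inc : E → E → Prop
  acyclic : ∀ e : E, ¬ Relation.TransGen Inc e e
  src : Fin k → E
  tml : Fin n → E
  src_inj : Function.Injective src
  tml_inj : Function.Injective tml
  src_ne_tml : ∀ (i : Fin k) (j : Fin n), src i ≠ tml j
  src_no_in : ∀ (i : Fin k) (e : E), ¬ Inc e (src i)
  tml_no_out : ∀ (j : Fin n) (e : E), ¬ Inc (tml j) e
  nonsrc_has_in : ∀ e : E, (∀ i : Fin k, e ≠ src i) → ∃ e', Inc e' e

namespace SumNetwork

variable {k n : ℕ} (N : SumNetwork k n)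

/-- `l` is the leader of the set of links `R`: `l ∈ R`, and every other link
of `R` has an incoming link belonging to `R`.  (In an acyclic network the
leader of a region is unique.) -/
def IsLeader (R : Set N.E) (l : N.E) : Prop :=
  l ∈ R ∧ ∀ e ∈ R, e ≠ l → ∃ e' ∈ R, N.Inc e' e

/-- `R` is a region: a nonempty set of links possessing a leader. -/
def IsRegion (R : Set N.E) : Prop := ∃ l, N.IsLeader R l

/-- `D` is a region decomposition: a partition of the set of all links into
mutually disjoint regions. -/
def IsRegionDecomposition (D : Set (Set N.E)) : Prop :=
  (∀ R ∈ D, N.IsRegion R) ∧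
  ⋃₀ D = Set.univ ∧
  ∀ R ∈ D, ∀ R' ∈ D, R ≠ R' → R ∩ R' = ∅

/-- `R'` is a parent of `R` in the region graph `RG(D)`: `R'` and `R` are
distinct members of `D` and `R'` contains an incoming link of the leader
of `R`. -/
def IsParent (D : Set (Set N.E)) (R' R : Set N.E) : Prop :=
  R' ∈ D ∧ R ∈ D ∧ R' ≠ R ∧
    ∃ l, N.IsLeader R l ∧ ∃ e' ∈ R', N.Inc e' l

/-- `D` is a basic region decomposition: a region decomposition such that
(1) for every region `R` and every non-leader `e ∈ R`, `In(e) ⊆ R`, and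
(2) every non-source region has at least two parents in `RG(D)`. -/
def IsBasicRegionDecomposition (D : Set (Set N.E)) : Prop :=
  N.IsRegionDecomposition D ∧
  (∀ R ∈ D, ∀ l, N.IsLeader R l → ∀ e ∈ R, e ≠ l →
    ∀ e', N.Inc e' e → e' ∈ R) ∧
  ∀ R ∈ D, (∀ i : Fin k, ¬ N.IsLeader R (N.src i)) →
    ∃ P Q : Set N.E, P ≠ Q ∧ N.IsParent D P R ∧ N.IsParent D Q R

/-- The sum-network is solvable: over some finite field `F` there is a linear
code `{d_e ∈ F^k : e ∈ E}` (with `d_{src i} = α_i`, and each non-source link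
carrying a vector in the span of those of its incoming links) whose value on
every terminal link is `ᾱ = (1,…,1)`. -/
def Solvable : Prop :=
  ∃ (F : Type) (_ : Field F) (_ : Fintype F) (d : N.E → Fin k → F),
    (∀ i : Fin k, d (N.src i) = Pi.single i 1) ∧
    (∀ e : N.E, (∀ i : Fin k, e ≠ N.src i) →
      d e ∈ Submodule.span F (d '' {e' | N.Inc e' e})) ∧
    ∀ j : Fin n, d (N.tml j) = fun _ => 1

/-- The region graph `RG(D)` of the region decomposition `D` is feasible:
over some finite field `F` there is a linear code `{d_R ∈ F^k : R ∈ D}`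
(with `d_{S_i} = α_i` for the `X_i` source region `S_i`, and each non-source
region carrying a vector in the span of those of its parents) whose value on
every terminal region is `ᾱ = (1,…,1)`. -/
def FeasibleDecomposition (D : Set (Set N.E)) : Prop :=
  ∃ (F : Type) (_ : Field F) (_ : Fintype F) (d : Set N.E → Fin k → F),
    (∀ R ∈ D, ∀ i : Fin k, N.IsLeader R (N.src i) → d R = Pi.single i 1) ∧
    (∀ R ∈ D, (∀ i : Fin k, ¬ N.IsLeader R (N.src i)) →
      d R ∈ Submodule.span F (d '' {R' | N.IsParent D R' R})) ∧
    ∀ R ∈ D, (∃ j : Fin n, N.tml j ∈ R) → d R = fun _ => 1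

end SumNetwork

namespace SumNetwork

variable {k n : ℕ} (N : SumNetwork k n)

open scoped Classical

lemma wfInc : WellFounded N.Inc := by
  letI := N.fintypeE
  haveI : IsIrrefl N.E (Relation.TransGen N.Inc) := ⟨fun e h => N.acyclic e h⟩
  haveI : IsTrans N.E (Relation.TransGen N.Inc) :=
    ⟨fun _ _ _ h1 h2 => h1.trans h2⟩
  exact Subrelation.wf (fun h' => Relation.TransGen.single h')
    (Finite.wellFounded_of_trans_of_irrefl _)

/-- The leader of the block of `e` in the unique basic region decomposition. -/
noncomputable def lead : N.E → N.E :=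
  N.wfInc.fix (fun e rec =>
    if h : ∃ e' : {x // N.Inc x e}, ∀ e'' : {x // N.Inc x e},
        rec e''.1 e''.2 = rec e'.1 e'.2
    then rec h.choose.1 h.choose.2 else e)

lemma lead_eq (e : N.E) :
    N.lead e = if h : ∃ e' : {x // N.Inc x e}, ∀ e'' : {x // N.Inc x e},
        N.lead e''.1 = N.lead e'.1
    then N.lead h.choose.1 else e := by
  conv_lhs => rw [lead, WellFounded.fix_eq]
  rfl

lemma lead_of_no_in (e : N.E) (h : ∀ e', ¬ N.Inc e' e) : N.lead e = e := by
  rw [lead_eq]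
  exact dif_neg (fun ⟨e', _⟩ => h e'.1 e'.2)

lemma lead_of_all_eq (e e₀ : N.E) (h0 : N.Inc e₀ e)
    (h : ∀ e', N.Inc e' e → N.lead e' = N.lead e₀) : N.lead e = N.lead e₀ := by
  rw [lead_eq]
  have hex : ∃ e' : {x // N.Inc x e}, ∀ e'' : {x // N.Inc x e},
      N.lead e''.1 = N.lead e'.1 :=
    ⟨⟨e₀, h0⟩, fun e'' => h e''.1 e''.2⟩
  rw [dif_pos hex]
  exact h hex.choose.1 hex.choose.2

lemma lead_of_two_ne (e e₁ e₂ : N.E) (h1 : N.Inc e₁ e) (h2 : N.Inc e₂ e)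
    (hne : N.lead e₁ ≠ N.lead e₂) : N.lead e = e := by
  rw [lead_eq]
  refine dif_neg (fun ⟨e', he'⟩ => hne ?_)
  rw [he' ⟨e₁, h1⟩, he' ⟨e₂, h2⟩]

lemma lead_reach (e : N.E) : Relation.ReflTransGen N.Inc (N.lead e) e := by
  induction e using N.wfInc.induction with
  | _ e ih =>
    rw [lead_eq]
    split
    · next h =>
      exact (ih h.choose.1 h.choose.2).tail h.choose.2
    · exact Relation.ReflTransGen.refl

lemma lead_ne_of_inc (e' e : N.E) (h : N.Inc e' e) : N.lead e' ≠ e := by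
  intro heq
  exact N.acyclic e (Relation.TransGen.tail' (heq ▸ N.lead_reach e') h)

lemma lead_idem (e : N.E) : N.lead (N.lead e) = N.lead e := by
  induction e using N.wfInc.induction with
  | _ e ih =>
    rw [lead_eq (e := e)]
    split
    · next h => exact ih h.choose.1 h.choose.2
    · next h => rw [lead_eq (e := e), dif_neg h]

lemma leader_reach {R : Set N.E} {l : N.E} (hL : N.IsLeader R l) :
    ∀ e ∈ R, Relation.ReflTransGen N.Inc l e := by
  intro e
  induction e using N.wfInc.induction with
  | _ e ih =>
    intro he
    rcases eq_or_ne e l with rfl | hne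
    · exact Relation.ReflTransGen.refl
    · obtain ⟨e', he', hinc⟩ := hL.2 e he hne
      exact (ih e' hinc he').tail hinc

lemma leader_unique {R : Set N.E} {l₁ l₂ : N.E}
    (h1 : N.IsLeader R l₁) (h2 : N.IsLeader R l₂) : l₁ = l₂ := by
  by_contra hne
  have r12 : Relation.ReflTransGen N.Inc l₁ l₂ := N.leader_reach h1 l₂ h2.1
  have r21 : Relation.ReflTransGen N.Inc l₂ l₁ := N.leader_reach h2 l₁ h1.1
  rcases (Relation.reflTransGen_iff_eq_or_transGen.mp r12) with h | h
  · exact hne h.symm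
  · exact N.acyclic l₁ (h.trans_left r21)

lemma fiber_isLeader {l : N.E} (hl : N.lead l = l) :
    N.IsLeader (N.lead ⁻¹' {l}) l := by
  refine ⟨hl, fun e he hne => ?_⟩
  have hle : N.lead e = l := he
  rw [lead_eq] at hle
  revert hle
  split
  · next h =>
    intro hle
    exact ⟨h.choose.1, show N.lead h.choose.1 = l from (h.choose_spec h.choose ▸ hle),
      h.choose.2⟩
  · intro hle; exact absurd hle hne

/-- In any basic region decomposition, the leader of the block of `e`
is `N.lead e`. -/
lemma basic_lead {D : Set (Set N.E)} (hD : N.IsBasicRegionDecomposition D) :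
    ∀ e : N.E, ∀ R ∈ D, e ∈ R → ∀ l, N.IsLeader R l → N.lead e = l := by
  obtain ⟨⟨hreg, hcover, hdisj⟩, hc1, hc2⟩ := hD
  intro e
  induction e using N.wfInc.induction with
  | _ e ih =>
    intro R hR he l hl
    rcases eq_or_ne e l with rfl | hne
    · -- e is the leader of its block
      by_cases hsrc : ∃ i : Fin k, e = N.src i
      · obtain ⟨i, rfl⟩ := hsrc
        exact N.lead_of_no_in _ (fun e' => N.src_no_in i e')
      · push_neg at hsrc
        have hns : ∀ i : Fin k, ¬ N.IsLeader R (N.src i) := by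
          intro i hLi
          exact hsrc i (N.leader_unique hl hLi)
        obtain ⟨P, Q, hPQ, ⟨hPD, _, hPneR, lP', hlP', e₁, he₁P, hinc₁⟩,
          ⟨hQD, _, hQneR, lQ', hlQ', e₂, he₂Q, hinc₂⟩⟩ := hc2 R hR hns
        have hlP'e : lP' = e := N.leader_unique hlP' hl
        have hlQ'e : lQ' = e := N.leader_unique hlQ' hl
        rw [hlP'e] at hinc₁
        rw [hlQ'e] at hinc₂
        obtain ⟨lP, hlP⟩ := hreg P hPD
        obtain ⟨lQ, hlQ⟩ := hreg Q hQD
        have h1 : N.lead e₁ = lP := ih e₁ hinc₁ P hPD he₁P lP hlP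
        have h2 : N.lead e₂ = lQ := ih e₂ hinc₂ Q hQD he₂Q lQ hlQ
        have hlne : lP ≠ lQ := by
          intro hEq
          have : lP ∈ P ∩ Q := ⟨hlP.1, hEq ▸ hlQ.1⟩
          rw [hdisj P hPD Q hQD hPQ] at this
          exact this
        exact N.lead_of_two_ne e e₁ e₂ hinc₁ hinc₂ (by rw [h1, h2]; exact hlne)
    · -- e is not the leader: all incoming links are in R
      obtain ⟨e₀, he₀R, hinc₀⟩ := hl.2 e he hne
      have hall : ∀ e', N.Inc e' e → N.lead e' = l := by
        intro e' hinc
        exact ih e' hinc R hR (hc1 R hR l hl e he hne e' hinc) l hl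
      calc N.lead e = N.lead e₀ := N.lead_of_all_eq e e₀ hinc₀
            (fun e' h' => by rw [hall e' h', hall e₀ hinc₀])
        _ = l := hall e₀ hinc₀

/-- The canonical basic region decomposition. -/
noncomputable def basicD : Set (Set N.E) :=
  {R | ∃ l, N.lead l = l ∧ R = N.lead ⁻¹' {l}}

lemma basicD_isBasic : N.IsBasicRegionDecomposition N.basicD := by
  have hfib : ∀ R ∈ N.basicD, ∃ l, N.lead l = l ∧ R = N.lead ⁻¹' {l} := fun R hR => hR
  refine ⟨⟨?_, ?_, ?_⟩, ?_, ?_⟩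
  · rintro R ⟨l, hl, rfl⟩
    exact ⟨l, N.fiber_isLeader hl⟩
  · ext e
    simp only [Set.mem_sUnion, Set.mem_univ, iff_true]
    exact ⟨N.lead ⁻¹' {N.lead e}, ⟨N.lead e, N.lead_idem e, rfl⟩, rfl⟩
  · rintro R ⟨l, hl, rfl⟩ R' ⟨l', hl', rfl⟩ hne
    ext e
    simp only [Set.mem_inter_iff, Set.mem_preimage, Set.mem_singleton_iff,
      Set.mem_empty_iff_false, iff_false, not_and]
    intro h1 h2
    cases h1.symm.trans (h2 : N.lead e = l')
    exact hne rfl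
  · rintro R ⟨l, hl, rfl⟩ l' hl' e he hne e' hinc
    have hl'' : l' = l := N.leader_unique hl' (N.fiber_isLeader hl)
    subst hl''
    have hle : N.lead e = l' := he
    -- e ≠ l', so e is in the positive branch: all incoming leads are equal
    rw [lead_eq] at hle
    revert hle
    split
    · next h =>
      intro hle
      have := h.choose_spec ⟨e', hinc⟩
      show N.lead e' = l'
      rw [this, hle]
    · intro hle; exact absurd hle hne
  · rintro R ⟨l, hl, rfl⟩ hns
    have hlead : N.IsLeader (N.lead ⁻¹' {l}) l := N.fiber_isLeader hl
    have hlsrc : ∀ i : Fin k, l ≠ N.src i := by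
      intro i heq
      exact hns i (heq ▸ hlead)
    obtain ⟨e₀, hinc₀⟩ := N.nonsrc_has_in l hlsrc
    -- the positive branch at l is impossible, since lead l = l
    have hneg : ¬ ∃ e' : {x // N.Inc x l}, ∀ e'' : {x // N.Inc x l},
        N.lead e''.1 = N.lead e'.1 := by
      intro h
      have : N.lead l = N.lead h.choose.1 := by
        rw [lead_eq]; rw [dif_pos h]
      exact N.lead_ne_of_inc h.choose.1 l h.choose.2 (this.symm.trans hl)
    push_neg at hneg
    obtain ⟨e₂, hne12⟩ := hneg ⟨e₀, hinc₀⟩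
    set l₁ := N.lead e₀ with hl₁
    set l₂ := N.lead e₂.1 with hl₂
    have hl₁fix : N.lead l₁ = l₁ := N.lead_idem e₀
    have hl₂fix : N.lead l₂ = l₂ := N.lead_idem e₂.1
    have hl₁l : l₁ ≠ l := N.lead_ne_of_inc e₀ l hinc₀
    have hl₂l : l₂ ≠ l := N.lead_ne_of_inc e₂.1 l e₂.2
    have hmemP : e₀ ∈ N.lead ⁻¹' {l₁} := rfl
    have hmemQ : e₂.1 ∈ N.lead ⁻¹' {l₂} := rfl
    have hl₁₂ : l₁ ≠ l₂ := fun h => hne12 h.symm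
    have fib_ne : ∀ a b : N.E, N.lead a = a → N.lead b = b → a ≠ b →
        N.lead ⁻¹' {a} ≠ N.lead ⁻¹' {b} := by
      intro a b ha hb hab h
      have : a ∈ N.lead ⁻¹' {b} := h ▸ (ha : a ∈ N.lead ⁻¹' {a})
      exact hab (ha.symm.trans this)
    refine ⟨N.lead ⁻¹' {l₁}, N.lead ⁻¹' {l₂}, fib_ne l₁ l₂ hl₁fix hl₂fix hl₁₂,
      ⟨⟨l₁, hl₁fix, rfl⟩, ⟨l, hl, rfl⟩, fib_ne l₁ l hl₁fix hl hl₁l,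
        l, hlead, e₀, hmemP, hinc₀⟩,
      ⟨⟨l₂, hl₂fix, rfl⟩, ⟨l, hl, rfl⟩, fib_ne l₂ l hl₂fix hl hl₂l,
        l, hlead, e₂.1, hmemQ, e₂.2⟩⟩

lemma basic_eq_basicD {D : Set (Set N.E)} (hD : N.IsBasicRegionDecomposition D) :
    D = N.basicD := by
  obtain ⟨⟨hreg, hcover, hdisj⟩, hc1, hc2⟩ := hD
  have hlead := N.basic_lead ⟨⟨hreg, hcover, hdisj⟩, hc1, hc2⟩
  have key : ∀ R ∈ D, ∀ l, N.IsLeader R l → R = N.lead ⁻¹' {l} ∧ N.lead l = l := by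
    intro R hR l hl
    have hfix : N.lead l = l := hlead l R hR hl.1 l hl
    constructor
    · ext e
      simp only [Set.mem_preimage, Set.mem_singleton_iff]
      constructor
      · intro he; exact hlead e R hR he l hl
      · intro he
        -- e lies in some block R'' of D, whose leader is lead e = l
        have : e ∈ ⋃₀ D := hcover ▸ Set.mem_univ e
        obtain ⟨R'', hR'', heR''⟩ := this
        obtain ⟨l'', hl''⟩ := hreg R'' hR''
        have : l'' = l := (hlead e R'' hR'' heR'' l'' hl'').symm.trans he
        subst this
        rcases eq_or_ne R R'' with rfl | hne
        · exact heR''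
        · have : l'' ∈ R ∩ R'' := ⟨hl.1, hl''.1⟩
          rw [hdisj R hR R'' hR'' hne] at this
          exact this.elim
    · exact hfix
  ext R
  constructor
  · intro hR
    obtain ⟨l, hl⟩ := hreg R hR
    obtain ⟨hReq, hfix⟩ := key R hR l hl
    exact ⟨l, hfix, hReq⟩
  · rintro ⟨l, hfix, rfl⟩
    have : l ∈ ⋃₀ D := hcover ▸ Set.mem_univ l
    obtain ⟨R', hR', hlR'⟩ := this
    obtain ⟨l', hl'⟩ := hreg R' hR'
    have hll' : N.lead l = l' := hlead l R' hR' hlR' l' hl'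
    have : l' = l := hll'.symm.trans hfix
    subst this
    obtain ⟨hReq, _⟩ := key R' hR' l' hl'
    rw [← hReq]
    exact hR'

end SumNetwork

/-- Every `k`-source `n`-terminal sum-network has exactly one basic region
decomposition (and hence exactly one basic region graph). -/
theorem basic_region_decomposition_unique (k n : ℕ) (N : SumNetwork k n) :
    ∃! D : Set (Set N.E), N.IsBasicRegionDecomposition D :=
  ⟨N.basicD, N.basicD_isBasic, fun _ hD => N.basic_eq_basicD hD⟩

end SumNetworksPaper
end

section
/- A k-source n-terminal sum-network G is solvable if and only if the region graph RG(D**) of its basic region decomposition D** is feasible. -/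
namespace SumNetworksPaper

section Aux

open Relation Submodule

variable {k n : ℕ} {N : SumNetwork k n}

lemma wf_inc (N : SumNetwork k n) : WellFounded N.Inc := by
  letI := N.fintypeE
  have htg : WellFounded (Relation.TransGen N.Inc) := by
    letI : IsTrans N.E (Relation.TransGen N.Inc) := ⟨fun _ _ _ => Relation.TransGen.trans⟩
    letI : IsIrrefl N.E (Relation.TransGen N.Inc) := ⟨N.acyclic⟩
    exact Finite.wellFounded_of_trans_of_irrefl _
  exact Subrelation.wf (fun h => Relation.TransGen.single h) htg

lemma leader_reaches {R : Set N.E} {l : N.E} (hl : N.IsLeader R l) :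
    ∀ e ∈ R, e ≠ l → Relation.TransGen N.Inc l e := by
  intro e
  refine (wf_inc N).induction
    (C := fun e => e ∈ R → e ≠ l → Relation.TransGen N.Inc l e) e ?_
  intro e ih he hne
  obtain ⟨e', he'R, he'⟩ := hl.2 e he hne
  by_cases h : e' = l
  · exact h ▸ Relation.TransGen.single he'
  · exact (ih e' he' he'R h).tail he'

lemma leader_unique {R : Set N.E} {l₁ l₂ : N.E}
    (h1 : N.IsLeader R l₁) (h2 : N.IsLeader R l₂) : l₁ = l₂ := by
  by_contra hne
  exact N.acyclic l₁
    ((leader_reaches h1 l₂ h2.1 (Ne.symm hne)).trans (leader_reaches h2 l₁ h1.1 hne))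

lemma leader_notin {R : Set N.E} {l e' : N.E} (hl : N.IsLeader R l)
    (h : N.Inc e' l) : e' ∉ R := by
  intro he'
  by_cases hne : e' = l
  · exact N.acyclic l (Relation.TransGen.single (hne ▸ h))
  · exact N.acyclic l ((leader_reaches hl e' he' hne).tail h)

lemma src_leader {R : Set N.E} {l : N.E} {i : Fin k}
    (hl : N.IsLeader R l) (h : N.src i ∈ R) : l = N.src i := by
  by_contra hne
  obtain ⟨e', _, hinc⟩ := hl.2 _ h (fun hh => hne hh.symm)
  exact N.src_no_in i e' hinc

lemma region_unique {D : Set (Set N.E)} (hD : N.IsRegionDecomposition D)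
    {R R' : Set N.E} (hR : R ∈ D) (hR' : R' ∈ D) {e : N.E}
    (he : e ∈ R) (he' : e ∈ R') : R = R' := by
  by_contra hne
  have := hD.2.2 R hR R' hR' hne
  exact absurd (Set.mem_inter he he') (by rw [this]; exact Set.notMem_empty e)

lemma exists_region {D : Set (Set N.E)} (hD : N.IsRegionDecomposition D)
    (e : N.E) : ∃ R ∈ D, e ∈ R := by
  have : e ∈ ⋃₀ D := by rw [hD.2.1]; trivial
  exact this

lemma region_span {F : Type} [Field F] {D : Set (Set N.E)}
    (hD : N.IsBasicRegionDecomposition D) {d : N.E → Fin k → F}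
    (hcode : ∀ e : N.E, (∀ i : Fin k, e ≠ N.src i) →
      d e ∈ Submodule.span F (d '' {e' | N.Inc e' e}))
    {R : Set N.E} (hR : R ∈ D) {l : N.E} (hl : N.IsLeader R l) :
    ∀ e ∈ R, d e ∈ Submodule.span F {d l} := by
  intro e
  refine (wf_inc N).induction
    (C := fun e => e ∈ R → d e ∈ Submodule.span F {d l}) e ?_
  intro e ih he
  by_cases hel : e = l
  · exact hel ▸ Submodule.mem_span_singleton_self _
  · have hnsrc : ∀ i, e ≠ N.src i := by
      intro i hi
      exact hel (hi.trans (src_leader hl (hi ▸ he)).symm)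
    have hle : Submodule.span F (d '' {e' | N.Inc e' e}) ≤ Submodule.span F {d l} := by
      rw [Submodule.span_le]
      rintro _ ⟨e', he', rfl⟩
      exact ih e' he' (hD.2.1 R hR l hl e he hel e' he')
    exact hle (hcode e hnsrc)

lemma span_swap {F V : Type} [Field F] [AddCommGroup V] [Module F V] {v w : V}
    (h : v ∈ Submodule.span F {w}) (hv : v ≠ 0) : w ∈ Submodule.span F {v} := by
  obtain ⟨a, rfl⟩ := Submodule.mem_span_singleton.mp h
  have ha : a ≠ 0 := by rintro rfl; simp at hv
  exact Submodule.mem_span_singleton.mpr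
    ⟨a⁻¹, by rw [smul_smul, inv_mul_cancel₀ ha, one_smul]⟩

end Aux
/-- A `k`-source `n`-terminal sum-network is solvable if and only if the
region graph of its basic region decomposition is feasible. -/
theorem solvable_iff_basic_feasible (k n : ℕ) (N : SumNetwork k n)
    (D : Set (Set N.E)) (hD : N.IsBasicRegionDecomposition D) :
    N.Solvable ↔ N.FeasibleDecomposition D := by
  classical
  rcases Nat.eq_zero_or_pos k with rfl | hk
  · -- trivial case k = 0: everything holds over `ZMod 2`
    constructor <;> intro _
    · refine ⟨ZMod 2, inferInstance, inferInstance, fun _ _ => 1, ?_, ?_, ?_⟩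
      · intro R _ i; exact i.elim0
      · intro R _ _
        have : (fun _ => 1 : Fin 0 → ZMod 2) = 0 := Subsingleton.elim _ _
        rw [this]; exact Submodule.zero_mem _
      · intro R _ _; rfl
    · refine ⟨ZMod 2, inferInstance, inferInstance, fun _ _ => 1, ?_, ?_, ?_⟩
      · intro i; exact i.elim0
      · intro e _
        have : (fun _ => 1 : Fin 0 → ZMod 2) = 0 := Subsingleton.elim _ _
        rw [this]; exact Submodule.zero_mem _
      · intro j; rfl
  constructor
  · rintro ⟨F, hF, hFin, d, hsrc, hspan, html⟩
    have allone_ne : (fun _ => (1 : F) : Fin k → F) ≠ 0 := by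
      intro h
      have := congrFun h ⟨0, hk⟩
      exact one_ne_zero this
    set c : Set N.E → Fin k → F := fun R =>
      if hR : R ∈ D then
        (if ∃ j, N.tml j ∈ R then (fun _ => 1) else d ((hD.1.1 R hR).choose))
      else 0 with hc
    refine ⟨F, hF, hFin, c, ?_, ?_, ?_⟩
    · -- source regions
      intro R hR i hli
      rw [hc]
      simp only [dif_pos hR]
      by_cases h2 : ∃ j, N.tml j ∈ R
      · rw [if_pos h2]
        obtain ⟨j, hj⟩ := h2
        have hsp := region_span hD hspan hR hli (N.tml j) hj
        rw [html j, hsrc i] at hsp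
        obtain ⟨a, ha⟩ := Submodule.mem_span_singleton.mp hsp
        have ha_i := congrFun ha i
        simp at ha_i
        rw [ha_i, one_smul] at ha
        exact ha.symm
      · rw [if_neg h2]
        have : (hD.1.1 R hR).choose = N.src i :=
          leader_unique (hD.1.1 R hR).choose_spec hli
        rw [this, hsrc i]
    · -- non-source regions
      intro R hR hns
      have hl := (hD.1.1 R hR).choose_spec
      set l := (hD.1.1 R hR).choose with hldef
      have hlns : ∀ i, l ≠ N.src i := fun i h => hns i (h ▸ hl)
      have hd : d l ∈ Submodule.span F (d '' {e' | N.Inc e' l}) := hspan l hlns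
      have hsub : Submodule.span F (d '' {e' | N.Inc e' l}) ≤
          Submodule.span F (c '' {R' | N.IsParent D R' R}) := by
        rw [Submodule.span_le]
        rintro _ ⟨e', (he' : N.Inc e' l), rfl⟩
        obtain ⟨R', hR'D, he'R'⟩ := exists_region hD.1 e'
        have hne : R' ≠ R := fun h => leader_notin hl he' (h ▸ he'R')
        have hpar : N.IsParent D R' R := ⟨hR'D, hR, hne, l, hl, e', he'R', he'⟩
        have hl' := (hD.1.1 R' hR'D).choose_spec
        have hd1 : d e' ∈ Submodule.span F {d ((hD.1.1 R' hR'D).choose)} :=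
          region_span hD hspan hR'D hl' e' he'R'
        have hd2 : d ((hD.1.1 R' hR'D).choose) ∈ Submodule.span F {c R'} := by
          rw [hc]
          simp only [dif_pos hR'D]
          by_cases h2 : ∃ j, N.tml j ∈ R'
          · rw [if_pos h2]
            obtain ⟨j, hj⟩ := h2
            have hsp := region_span hD hspan hR'D hl' (N.tml j) hj
            rw [html j] at hsp
            exact span_swap hsp allone_ne
          · rw [if_neg h2]
            exact Submodule.mem_span_singleton_self _
        have hd3 : Submodule.span F {d ((hD.1.1 R' hR'D).choose)} ≤
            Submodule.span F {c R'} :=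
          Submodule.span_le.mpr (Set.singleton_subset_iff.mpr hd2)
        exact Submodule.span_mono
          (Set.singleton_subset_iff.mpr (Set.mem_image_of_mem c (show R' ∈ {R' | N.IsParent D R' R} from hpar))) (hd3 hd1)
      have hdl : d l ∈ Submodule.span F (c '' {R' | N.IsParent D R' R}) := hsub hd
      have hcR : c R ∈ Submodule.span F {d l} := by
        rw [hc]
        simp only [dif_pos hR]
        by_cases h2 : ∃ j, N.tml j ∈ R
        · rw [if_pos h2]
          obtain ⟨j, hj⟩ := h2
          have hsp := region_span hD hspan hR hl (N.tml j) hj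
          rw [html j] at hsp
          exact hsp
        · rw [if_neg h2]
          exact Submodule.mem_span_singleton_self _
      obtain ⟨a, ha⟩ := Submodule.mem_span_singleton.mp hcR
      rw [← ha]
      exact Submodule.smul_mem _ a hdl
    · -- terminal regions
      intro R hR h2
      rw [hc]
      simp only [dif_pos hR, if_pos h2]
  · rintro ⟨F, hF, hFin, c, hsrc, hspan, html⟩
    choose reg hregD hregmem using fun e => exists_region (N := N) hD.1 e
    refine ⟨F, hF, hFin, fun e => c (reg e), ?_, ?_, ?_⟩
    · -- source links
      intro i
      have hl := (hD.1.1 _ (hregD (N.src i))).choose_spec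
      have heq : (hD.1.1 _ (hregD (N.src i))).choose = N.src i :=
        src_leader hl (hregmem (N.src i))
      rw [heq] at hl
      exact hsrc _ (hregD (N.src i)) i hl
    · -- non-source links
      intro e hns
      have hR := hregD e
      have hl := (hD.1.1 _ hR).choose_spec
      set l := (hD.1.1 _ hR).choose with hldef
      by_cases hel : e = l
      · -- e is the leader of its region
        have hnsl : ∀ i, ¬ N.IsLeader (reg e) (N.src i) := by
          intro i hli
          exact hns i (hel.trans (leader_unique hl hli))
        have hcR := hspan (reg e) hR hnsl
        have hsub : Submodule.span F (c '' {R' | N.IsParent D R' (reg e)}) ≤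
            Submodule.span F ((fun e => c (reg e)) '' {e' | N.Inc e' e}) := by
          rw [Submodule.span_le]
          rintro _ ⟨R', hpar, rfl⟩
          obtain ⟨hR'D, _, hne, l₂, hl₂, e', he'R', hince'⟩ := hpar
          have hl₂l : l₂ = l := leader_unique hl₂ hl
          have hreg' : reg e' = R' :=
            region_unique hD.1 (hregD e') hR'D (hregmem e') he'R'
          have hince : N.Inc e' e := by rw [hel, ← hl₂l]; exact hince'
          exact Submodule.subset_span
            ⟨e', hince, show c (reg e') = c R' by rw [hreg']⟩
        exact hsub hcR
      · -- e is not the leader: it has an incoming link in the same region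
        obtain ⟨e', he'R, hince⟩ := hl.2 e (hregmem e) hel
        have hreg' : reg e' = reg e :=
          region_unique hD.1 (hregD e') hR (hregmem e') he'R
        show c (reg e) ∈ Submodule.span F ((fun e => c (reg e)) '' {e' | N.Inc e' e})
        have : c (reg e) = c (reg e') := by rw [hreg']
        rw [this]
        exact Submodule.subset_span ⟨e', hince, rfl⟩
    · -- terminal links
      intro j
      exact html _ (hregD (N.tml j)) ⟨j, hregmem (N.tml j)⟩

end SumNetworksPaper
end

section
/- Let RG be a finite directed acyclic simple graph on vertex set D and let Θ_1, Θ_2 ⊆ D. Then reg(Θ_1) ∩ reg(Θ_2) = reg(Θ), where Θ = (reg(Θ_1) ∩ Θ_2) ∪ (reg(Θ_2) ∩ Θ_1). -/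
namespace SumNetworksPaper

/-- `SuperReg Adj Θ R` : `R` belongs to the super region generated by `Θ`:
the smallest set containing `Θ` and containing every vertex whose parent set
(in-neighbourhood) is nonempty and entirely contained in the set.
`Adj P R` means that there is an edge from `P` to `R`. -/
inductive SuperReg {V : Type} (Adj : V → V → Prop) (Θ : Set V) : V → Prop
  | base {R : V} : R ∈ Θ → SuperReg Adj Θ R
  | step {R : V} : (∃ P, Adj P R) → (∀ P, Adj P R → SuperReg Adj Θ P) →
      SuperReg Adj Θ R

/-- The super region `reg(Θ)` as a set. -/
def superReg {V : Type} (Adj : V → V → Prop) (Θ : Set V) : Set V :=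
  {R | SuperReg Adj Θ R}

/-- For a finite directed acyclic simple graph and `Θ₁, Θ₂ ⊆ D`:
`reg(Θ₁) ∩ reg(Θ₂) = reg((reg(Θ₁) ∩ Θ₂) ∪ (reg(Θ₂) ∩ Θ₁))`. -/
theorem superReg_inter {V : Type} [Fintype V] (Adj : V → V → Prop)
    (hacyc : ∀ v : V, ¬ Relation.TransGen Adj v v) (Θ₁ Θ₂ : Set V) :
    superReg Adj Θ₁ ∩ superReg Adj Θ₂ =
      superReg Adj ((superReg Adj Θ₁ ∩ Θ₂) ∪ (superReg Adj Θ₂ ∩ Θ₁)) := by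
  set Θ : Set V := (superReg Adj Θ₁ ∩ Θ₂) ∪ (superReg Adj Θ₂ ∩ Θ₁) with hΘ
  have hwf : WellFounded (Relation.TransGen Adj) := by
    have : IsIrrefl V (Relation.TransGen Adj) := ⟨hacyc⟩
    have : IsTrans V (Relation.TransGen Adj) := inferInstance
    exact Finite.wellFounded_of_trans_of_irrefl _
  ext R
  constructor
  · rintro ⟨h₁, h₂⟩
    induction R using hwf.induction with
    | _ R IH =>
      cases h₁ with
      | base hR =>
        exact SuperReg.base (Or.inr ⟨h₂, hR⟩)
      | step hex hpar₁ =>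
        cases h₂ with
        | base hR =>
          exact SuperReg.base (Or.inl ⟨SuperReg.step hex hpar₁, hR⟩)
        | step hex' hpar₂ =>
          exact SuperReg.step hex fun P hP =>
            IH P (Relation.TransGen.single hP) (hpar₁ P hP) (hpar₂ P hP)
  · intro h
    induction h with
    | base hR =>
      rcases hR with ⟨h₁, h₂⟩ | ⟨h₂, h₁⟩
      · exact ⟨h₁, SuperReg.base h₂⟩
      · exact ⟨SuperReg.base h₁, h₂⟩
    | step hex _ IH =>
      exact ⟨SuperReg.step hex fun P hP => (IH P hP).1,
             SuperReg.step hex fun P hP => (IH P hP).2⟩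

end SumNetworksPaper
end

section
/- Let RG be a region graph with source vertices S_1, S_2, S_3. For each i ∈ {1,2,3} with {j_1,j_2} = {1,2,3} ∖ {i}, reg(S_i,S_{j_1}) ∩ reg(S_i,S_{j_2}) = {S_i}; consequently reg°(S_1,S_2), reg°(S_1,S_3) and reg°(S_2,S_3) are pairwise disjoint. -/
namespace SumNetworksPaper

/-- A region graph: a finite directed acyclic simple graph with three source
vertices `S 0, S 1, S 2` (which have no parents) and `n` terminal vertices
`T 0, …, T (n-1)`, in which every non-source vertex has at least two parents.
`Adj P R` means that there is an edge from `P` to `R`, i.e. `P` is a parent of `R`. -/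
structure RegionGraph (n : ℕ) where
  V : Type
  fintypeV : Fintype V
  Adj : V → V → Prop
  acyclic : ∀ v : V, ¬ Relation.TransGen Adj v v
  S : Fin 3 → V
  T : Fin n → V
  S_inj : Function.Injective S
  T_inj : Function.Injective T
  source_no_parent : ∀ (i : Fin 3) (v : V), ¬ Adj v (S i)
  two_parents : ∀ v : V, (∀ i : Fin 3, v ≠ S i) →
    ∃ p q : V, p ≠ q ∧ Adj p v ∧ Adj q v

namespace RegionGraph

variable {n : ℕ} (G : RegionGraph n)

/-- The super region `reg(Θ)`. -/
def reg (Θ : Set G.V) : Set G.V := superReg G.Adj Θ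

/-- `reg°(Θ) = reg(Θ) ∖ Θ`. -/
def regO (Θ : Set G.V) : Set G.V := G.reg Θ \ Θ

/-- `reg(S_i, S_j)`. -/
def regPair (i j : Fin 3) : Set G.V := G.reg {G.S i, G.S j}

/-- `u → v` : there is a directed path from `u` to `v` (possibly trivial). -/
def Reaches (u v : G.V) : Prop := Relation.ReflTransGen G.Adj u v

/-- `Π = reg(S_1,S_2) ∪ reg(S_1,S_3) ∪ reg(S_2,S_3)`. -/
def bigPi : Set G.V := G.regPair 0 1 ∪ G.regPair 0 2 ∪ G.regPair 1 2

/-- `Ω_I` : vertices outside `Π` reaching exactly the terminals `T j`, `j ∈ I`. -/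
def Omega (I : Set (Fin n)) : Set G.V :=
  {R | R ∉ G.bigPi ∧ ∀ j : Fin n, j ∈ I ↔ G.Reaches R (G.T j)}

/-- `Λ_I` : vertices of `Π` having a child in `Ω_I`. -/
def Lambda (I : Set (Fin n)) : Set G.V :=
  {Q | Q ∈ G.bigPi ∧ ∃ R, G.Adj Q R ∧ R ∈ G.Omega I}

/-- Assumption 1: no terminal vertex lies in `Π`. -/
def Assumption1 : Prop := ∀ j : Fin n, G.T j ∉ G.bigPi

/-- Terminal-separability: `Ω_I = ∅` whenever `|I| > 1`. -/
def TerminalSeparable : Prop :=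
  ∀ I : Set (Fin n), 1 < I.ncard → G.Omega I = ∅

/-- A linear code of the region graph over `F`. -/
def IsLinearCode (F : Type) [Field F] (d : G.V → Fin 3 → F) : Prop :=
  (∀ i : Fin 3, d (G.S i) = Pi.single i 1) ∧
  ∀ v : G.V, (∀ i : Fin 3, v ≠ G.S i) →
    d v ∈ Submodule.span F (d '' {p | G.Adj p v})

/-- A linear solution: a linear code giving `ᾱ = (1,1,1)` at every terminal. -/
def IsLinearSolution (F : Type) [Field F] (d : G.V → Fin 3 → F) : Prop :=
  G.IsLinearCode F d ∧ ∀ j : Fin n, d (G.T j) = fun _ => 1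

/-- Feasibility: existence of a linear solution over some finite field. -/
def Feasible : Prop :=
  ∃ (F : Type) (_ : Field F) (_ : Fintype F) (d : G.V → Fin 3 → F),
    G.IsLinearSolution F d

/-- Conditions (1)–(3) on a family `{d_R : R ∈ Π}`. -/
def Conds123 (F : Type) [Field F] (d : G.V → Fin 3 → F) : Prop :=
  (∀ i : Fin 3, d (G.S i) = Pi.single i 1) ∧
  (∀ R ∈ G.bigPi, (∀ i : Fin 3, R ≠ G.S i) →
    d R ∈ Submodule.span F (d '' {p | G.Adj p R})) ∧
  ∀ j : Fin n, (fun _ => (1 : F)) ∈ Submodule.span F (d '' G.Lambda {j})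

/-- `I` is a partition of `Π` into nonempty classes. -/
def IsPartitionOfPi (I : Set (Set G.V)) : Prop :=
  (∀ Δ ∈ I, Δ.Nonempty ∧ Δ ⊆ G.bigPi) ∧
  ⋃₀ I = G.bigPi ∧
  ∀ Δ ∈ I, ∀ Δ' ∈ I, Δ ≠ Δ' → Δ ∩ Δ' = ∅

/-- The three sources lie in three distinct classes of the partition. -/
def SourcesSeparated (I : Set (Set G.V)) : Prop :=
  ∀ Δ ∈ I, ∀ i j : Fin 3, G.S i ∈ Δ → G.S j ∈ Δ → i = j

/-- `[S_i]_i = [S_i]_{i,j₁} ∪ [S_i]_{i,j₂}` for the class `Δ` of `S_i`. -/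
def srcSub (i : Fin 3) (Δ : Set G.V) : Set G.V :=
  Δ ∩ ⋃ (j : Fin 3) (_ : j ≠ i), G.regPair i j

/-- `X` is a subclass of the class `Δ`. -/
def IsSubclass (Δ X : Set G.V) : Prop :=
  (∃ i : Fin 3, G.S i ∈ Δ ∧
    (X = G.srcSub i Δ ∨
      ∃ j k : Fin 3, j ≠ k ∧ j ≠ i ∧ k ≠ i ∧ X = Δ ∩ G.regPair j k)) ∨
  ((∀ i : Fin 3, G.S i ∉ Δ) ∧ ∃ i j : Fin 3, i ≠ j ∧ X = Δ ∩ G.regPair i j)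

/-- The two classes `Δ'`, `Δ''` are connected. -/
def ClassesConnected (Δ' Δ'' : Set G.V) : Prop :=
  (∃ (j : Fin n) (X' X'' : Set G.V),
      G.IsSubclass Δ' X' ∧ G.IsSubclass Δ'' X'' ∧ G.Lambda {j} ⊆ X' ∪ X'') ∨
  ∃ i j : Fin 3, i ≠ j ∧
    (G.reg (Δ' ∩ G.regPair i j) ∩ G.reg (Δ'' ∩ G.regPair i j)).Nonempty

/-- The partition `I` of `Π` is compatible. -/
def Compatible (I : Set (Set G.V)) : Prop :=
  G.SourcesSeparated I ∧
  (∀ Δ' ∈ I, ∀ Δ'' ∈ I, Δ' ≠ Δ'' → ¬ G.ClassesConnected Δ' Δ'') ∧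
  ∀ (j : Fin n) (i₁ i₂ : Fin 3), i₁ ≠ i₂ →
    ∀ Δ₁ ∈ I, ∀ Δ₂ ∈ I, G.S i₁ ∈ Δ₁ → G.S i₂ ∈ Δ₂ →
      ¬ (G.Lambda {j} ⊆ G.srcSub i₁ Δ₁ ∪ G.srcSub i₂ Δ₂ ∪
          ⋃₀ {X : Set G.V | ∃ Δ ∈ I, (∀ i : Fin 3, G.S i ∉ Δ) ∧
                X = Δ ∩ G.regPair i₁ i₂})

/-- `I'` is obtained from `I` by merging two connected classes. -/
def IsContractionStep (I I' : Set (Set G.V)) : Prop :=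
  ∃ Δ' Δ'', Δ' ∈ I ∧ Δ'' ∈ I ∧ Δ' ≠ Δ'' ∧ G.ClassesConnected Δ' Δ'' ∧
    I' = insert (Δ' ∪ Δ'') (I \ {Δ', Δ''})

/-- The trivial partition of `Π` into singletons. -/
def trivialPartition : Set (Set G.V) := {X | ∃ R ∈ G.bigPi, X = {R}}

/-- `Ic` is a character partition of `Π`. -/
def IsCharacterPartition (Ic : Set (Set G.V)) : Prop :=
  ∃ (L : ℕ) (c : ℕ → Set (Set G.V)),
    c 0 = G.trivialPartition ∧ c L = Ic ∧
    (∀ ℓ < L, G.SourcesSeparated (c ℓ) ∧ G.IsContractionStep (c ℓ) (c (ℓ + 1))) ∧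
    ((∃ Δ ∈ Ic, ∃ i j : Fin 3, i ≠ j ∧ G.S i ∈ Δ ∧ G.S j ∈ Δ) ∨
      ∀ Δ' ∈ Ic, ∀ Δ'' ∈ Ic, Δ' ≠ Δ'' → ¬ G.ClassesConnected Δ' Δ'')

/-- Property (a): `d_{Q'} ∈ span{d_Q, ᾱ}` for all `Q, Q'` in the class `Δ`. -/
def PropertyA (F : Type) [Field F] (d : G.V → Fin 3 → F) (Δ : Set G.V) : Prop :=
  ∀ Q ∈ Δ, ∀ Q' ∈ Δ, d Q' ∈ Submodule.span F {d Q, fun _ => (1 : F)}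

end RegionGraph

/-- Condition (C-IR) for a region graph with three terminals. -/
def RegionGraph.CIR (G : RegionGraph 3) : Prop :=
  ∃ (σ τ : Equiv.Perm (Fin 3)) (P₁ P₂ : G.V),
    P₁ ∈ G.regO {G.S (σ 1), G.S (σ 2)} ∧
    P₂ ∈ G.regO {G.S (σ 0), G.S (σ 1)} ∧
    G.Lambda {τ 0} = {G.S (σ 0), P₁} ∧
    G.Lambda {τ 1} = {P₁, P₂} ∧
    G.Lambda {τ 2} ⊆ G.reg {G.S (σ 0), P₂} ∪ G.reg {G.S (σ 0), G.S (σ 2)}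


lemma superReg_pair_key {n : ℕ} (G : RegionGraph n) (i j₁ j₂ : Fin 3)
    (h12 : j₁ ≠ j₂) (h1 : j₁ ≠ i) (h2 : j₂ ≠ i) :
    ∀ R, SuperReg G.Adj {G.S i, G.S j₁} R → SuperReg G.Adj {G.S i, G.S j₂} R →
      R = G.S i := by
  intro R hA
  induction hA with
  | @base R hR =>
    intro hB
    rcases hR with rfl | rfl
    · rfl
    · cases hB with
      | base hm =>
        rcases hm with hm | hm
        · exact absurd (G.S_inj hm) h1
        · exact absurd (G.S_inj hm) h12
      | step hex _ =>
        obtain ⟨P, hP⟩ := hex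
        exact absurd hP (G.source_no_parent j₁ P)
  | @step R hex hall ih =>
    intro hB
    obtain ⟨P₀, hP₀⟩ := hex
    cases hB with
    | base hm =>
      rcases hm with rfl | rfl
      · exact absurd hP₀ (G.source_no_parent i P₀)
      · exact absurd hP₀ (G.source_no_parent j₂ P₀)
    | step _ hall2 =>
      have hns : ∀ k : Fin 3, R ≠ G.S k := by
        intro k hk
        exact G.source_no_parent k P₀ (hk ▸ hP₀)
      obtain ⟨p, q, hpq, hp, hq⟩ := G.two_parents R hns
      have := (ih p hp (hall2 p hp)).trans (ih q hq (hall2 q hq)).symm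
      exact absurd this hpq

lemma regPair_inter_eq {n : ℕ} (G : RegionGraph n) (i j₁ j₂ : Fin 3)
    (h12 : j₁ ≠ j₂) (h1 : j₁ ≠ i) (h2 : j₂ ≠ i) :
    G.regPair i j₁ ∩ G.regPair i j₂ = {G.S i} := by
  ext R
  constructor
  · rintro ⟨hA, hB⟩
    exact superReg_pair_key G i j₁ j₂ h12 h1 h2 R hA hB
  · rintro rfl
    exact ⟨SuperReg.base (Or.inl rfl), SuperReg.base (Or.inl rfl)⟩

/-- `reg(S_i,S_{j₁}) ∩ reg(S_i,S_{j₂}) = {S_i}` and consequently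
`reg°(S_1,S_2)`, `reg°(S_1,S_3)`, `reg°(S_2,S_3)` are pairwise disjoint. -/
theorem reg_pair_inter {n : ℕ} (G : RegionGraph n) :
    (∀ i j₁ j₂ : Fin 3, j₁ ≠ j₂ → j₁ ≠ i → j₂ ≠ i →
      G.regPair i j₁ ∩ G.regPair i j₂ = {G.S i}) ∧
    G.regO {G.S 0, G.S 1} ∩ G.regO {G.S 0, G.S 2} = ∅ ∧
    G.regO {G.S 0, G.S 1} ∩ G.regO {G.S 1, G.S 2} = ∅ ∧
    G.regO {G.S 0, G.S 2} ∩ G.regO {G.S 1, G.S 2} = ∅ := by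
  refine ⟨fun i j₁ j₂ a b c => regPair_inter_eq G i j₁ j₂ a b c, ?_, ?_, ?_⟩
  · ext R
    simp only [Set.mem_inter_iff, Set.mem_empty_iff_false, iff_false, not_and]
    rintro ⟨hA, hnA⟩ ⟨hB, hnB⟩
    exact hnA (Or.inl (superReg_pair_key G 0 1 2 (by decide) (by decide)
      (by decide) R hA hB))
  · ext R
    simp only [Set.mem_inter_iff, Set.mem_empty_iff_false, iff_false, not_and]
    rintro ⟨hA, hnA⟩ ⟨hB, hnB⟩
    have hA' : SuperReg G.Adj {G.S 1, G.S 0} R := by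
      rwa [Set.pair_comm]
    exact hnA (Or.inr (superReg_pair_key G 1 0 2 (by decide) (by decide)
      (by decide) R hA' hB))
  · ext R
    simp only [Set.mem_inter_iff, Set.mem_empty_iff_false, iff_false, not_and]
    rintro ⟨hA, hnA⟩ ⟨hB, hnB⟩
    have hA' : SuperReg G.Adj {G.S 2, G.S 0} R := by
      rwa [Set.pair_comm]
    have hB' : SuperReg G.Adj {G.S 2, G.S 1} R := by
      rwa [Set.pair_comm]
    exact hnA (Or.inr (superReg_pair_key G 2 0 1 (by decide) (by decide)
      (by decide) R hA' hB'))


end SumNetworksPaper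
end

section
/- Let RG be a region graph satisfying Assumption 1 that is terminal-separable. Then for every j ∈ {1,…,n} and every pair {i_1,i_2} ⊆ {1,2,3}: T_j ∈ Ω_j ⊆ reg°(Λ_j), Λ_j is not contained in reg(S_{i_1},S_{i_2}), and in particular |Λ_j| ≥ 2. -/
namespace SumNetworksPaper

section Aux

lemma superReg_trans {V : Type} {Adj : V → V → Prop} {Θ Θ' : Set V}
    (h : Θ ⊆ superReg Adj Θ') {R : V} (hR : SuperReg Adj Θ R) :
    SuperReg Adj Θ' R := by
  induction hR with
  | base hmem => exact h hmem
  | step hex hpar ih => exact SuperReg.step hex ih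

lemma not_superReg_empty {V : Type} {Adj : V → V → Prop} {R : V}
    (h : SuperReg Adj (∅ : Set V) R) : False := by
  induction h with
  | base hmem => exact hmem
  | step hex hpar ih => obtain ⟨P, hP⟩ := hex; exact ih P hP

namespace RegionGraph
variable {n : ℕ} (G : RegionGraph n)

lemma regPair_comm (i j : Fin 3) : G.regPair i j = G.regPair j i := by
  unfold RegionGraph.regPair
  rw [Set.pair_comm]

lemma regPair_subset_bigPi {i j : Fin 3} (h : i ≠ j) :
    G.regPair i j ⊆ G.bigPi := by
  unfold RegionGraph.bigPi
  fin_cases i <;> fin_cases j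
  · exact absurd rfl h
  · exact Set.subset_union_left.trans Set.subset_union_left
  · exact Set.subset_union_right.trans Set.subset_union_left
  · rw [G.regPair_comm]
    exact Set.subset_union_left.trans Set.subset_union_left
  · exact absurd rfl h
  · exact Set.subset_union_right
  · rw [G.regPair_comm]
    exact Set.subset_union_right.trans Set.subset_union_left
  · rw [G.regPair_comm]
    exact Set.subset_union_right
  · exact absurd rfl h

lemma S_mem_bigPi (i : Fin 3) : G.S i ∈ G.bigPi := by
  fin_cases i
  · exact G.regPair_subset_bigPi (i := 0) (j := 1) (by decide)
      (SuperReg.base (Or.inl rfl))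
  · exact G.regPair_subset_bigPi (i := 0) (j := 1) (by decide)
      (SuperReg.base (Or.inr rfl))
  · exact G.regPair_subset_bigPi (i := 0) (j := 2) (by decide)
      (SuperReg.base (Or.inr rfl))

lemma T_mem_Omega (hA : G.Assumption1) (hTS : G.TerminalSeparable) (j : Fin n) :
    G.T j ∈ G.Omega {j} := by
  haveI := G.fintypeV
  refine ⟨hA j, fun k => ⟨fun hk => ?_, fun hk => ?_⟩⟩
  · rw [Set.mem_singleton_iff] at hk
    subst hk
    exact Relation.ReflTransGen.refl
  · by_contra hne
    have hne' : k ≠ j := fun h => hne (by simp [h])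
    set I : Set (Fin n) := {m | G.Reaches (G.T j) (G.T m)} with hI
    have hmem : G.T j ∈ G.Omega I := ⟨hA j, fun m => Iff.rfl⟩
    have h2 : 1 < I.ncard := by
      rw [Set.one_lt_ncard (Set.toFinite I)]
      exact ⟨k, hk, j, Relation.ReflTransGen.refl, hne'⟩
    rw [hTS I h2] at hmem
    exact hmem

lemma omega_subset_reg (hTS : G.TerminalSeparable) (j : Fin n) :
    G.Omega {j} ⊆ G.reg (G.Lambda {j}) := by
  haveI := G.fintypeV
  have hirr : IsIrrefl G.V (Relation.TransGen G.Adj) := ⟨G.acyclic⟩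
  have htr : IsTrans G.V (Relation.TransGen G.Adj) :=
    ⟨fun _ _ _ => Relation.TransGen.trans⟩
  have hwf : WellFounded (Relation.TransGen G.Adj) :=
    Finite.wellFounded_of_trans_of_irrefl _
  intro R hR0
  refine hwf.induction
    (C := fun R => R ∈ G.Omega {j} → SuperReg G.Adj (G.Lambda {j}) R) R ?_ hR0
  intro R ih hR
  have hnotS : ∀ i : Fin 3, R ≠ G.S i := by
    intro i hEq
    exact hR.1 (hEq ▸ G.S_mem_bigPi i)
  obtain ⟨p, q, _, hp, _⟩ := G.two_parents R hnotS
  refine SuperReg.step ⟨p, hp⟩ ?_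
  intro P hP
  by_cases hPPi : P ∈ G.bigPi
  · exact SuperReg.base ⟨hPPi, R, hP, hR⟩
  · have hreach : G.Reaches P (G.T j) :=
      Relation.ReflTransGen.head hP ((hR.2 j).mp rfl)
    set I : Set (Fin n) := {m | G.Reaches P (G.T m)} with hIdef
    have hmem : P ∈ G.Omega I := ⟨hPPi, fun m => Iff.rfl⟩
    have hj : j ∈ I := hreach
    have hone : ¬ 1 < I.ncard := by
      intro h2
      rw [hTS I h2] at hmem
      exact hmem
    have hsub : ∀ a ∈ I, ∀ b ∈ I, a = b := by
      intro a ha b hb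
      by_contra hab
      exact hone ((Set.one_lt_ncard (Set.toFinite I)).mpr ⟨a, ha, b, hb, hab⟩)
    have hPOm : P ∈ G.Omega {j} := by
      refine ⟨hPPi, fun k => ⟨fun hk => ?_, fun hk => ?_⟩⟩
      · rw [Set.mem_singleton_iff] at hk
        subst hk
        exact hreach
      · exact Set.mem_singleton_iff.mpr (hsub k hk j hj)
    exact ih P (Relation.TransGen.single hP) hPOm

lemma lambda_not_subset (hA : G.Assumption1) (hTS : G.TerminalSeparable)
    (j : Fin n) {i₁ i₂ : Fin 3} (h : i₁ ≠ i₂) :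
    ¬ G.Lambda {j} ⊆ G.regPair i₁ i₂ := by
  intro hsub
  have hT : G.T j ∈ G.reg (G.Lambda {j}) :=
    G.omega_subset_reg hTS j (G.T_mem_Omega hA hTS j)
  have hT' : SuperReg G.Adj {G.S i₁, G.S i₂} (G.T j) :=
    superReg_trans hsub hT
  exact hA j (G.regPair_subset_bigPi h hT')

end RegionGraph
end Aux

/-- For a terminal-separable region graph satisfying Assumption 1:
`T_j ∈ Ω_j ⊆ reg°(Λ_j)`, `Λ_j ⊄ reg(S_{i₁},S_{i₂})`, and `|Λ_j| ≥ 2`. -/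
theorem in_reg_lambda {n : ℕ} (G : RegionGraph n)
    (hA : G.Assumption1) (hTS : G.TerminalSeparable) :
    ∀ j : Fin n,
      G.T j ∈ G.Omega {j} ∧
      G.Omega {j} ⊆ G.regO (G.Lambda {j}) ∧
      (∀ i₁ i₂ : Fin 3, i₁ ≠ i₂ → ¬ G.Lambda {j} ⊆ G.regPair i₁ i₂) ∧
      2 ≤ (G.Lambda {j}).ncard := by
  haveI := G.fintypeV
  intro j
  refine ⟨G.T_mem_Omega hA hTS j, ?_, fun i₁ i₂ h => G.lambda_not_subset hA hTS j h, ?_⟩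
  · intro R hR
    refine ⟨G.omega_subset_reg hTS j hR, fun hL => ?_⟩
    exact hR.1 hL.1
  · by_contra hlt
    have hle : (G.Lambda {j}).ncard ≤ 1 := by omega
    rw [Set.ncard_le_one_iff_eq (Set.toFinite _)] at hle
    rcases hle with hE | ⟨Q, hQ⟩
    · have hT : G.T j ∈ G.reg (G.Lambda {j}) :=
        G.omega_subset_reg hTS j (G.T_mem_Omega hA hTS j)
      rw [hE] at hT
      exact not_superReg_empty hT
    · have hQmem : Q ∈ G.Lambda {j} := by rw [hQ]; exact rfl
      have hQPi : Q ∈ G.bigPi := hQmem.1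
      rcases hQPi with (h01 | h02) | h12
      · exact G.lambda_not_subset hA hTS j (i₁ := 0) (i₂ := 1) (by decide)
          (hQ ▸ Set.singleton_subset_iff.mpr h01)
      · exact G.lambda_not_subset hA hTS j (i₁ := 0) (i₂ := 2) (by decide)
          (hQ ▸ Set.singleton_subset_iff.mpr h02)
      · exact G.lambda_not_subset hA hTS j (i₁ := 1) (i₂ := 2) (by decide)
          (hQ ▸ Set.singleton_subset_iff.mpr h12)

end SumNetworksPaper
end

section
/- Let RG be a region graph satisfying Assumption 1 that is terminal-separable. Then RG is feasible if and only if, over some finite field F, there exists a family of vectors {d_R ∈ F^3 : R ∈ Π} satisfying conditions (1)–(3). -/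
namespace SumNetworksPaper

section Aux

open Relation

variable {n : ℕ} (G : RegionGraph n)

private lemma adj_wf : WellFounded G.Adj := by
  haveI := G.fintypeV
  haveI : IsIrrefl G.V (TransGen G.Adj) := ⟨G.acyclic⟩
  have h2 : WellFounded (TransGen G.Adj) := Finite.wellFounded_of_trans_of_irrefl _
  exact Subrelation.wf (fun h => TransGen.single h) h2

private lemma adj_wf' : WellFounded (Function.swap G.Adj) := by
  haveI := G.fintypeV
  haveI : IsIrrefl G.V (TransGen (Function.swap G.Adj)) :=
    ⟨fun a ha => G.acyclic a (by rwa [Relation.transGen_swap] at ha)⟩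
  have h2 : WellFounded (TransGen (Function.swap G.Adj)) :=
    Finite.wellFounded_of_trans_of_irrefl _
  exact Subrelation.wf (fun h => TransGen.single h) h2

private lemma source_mem_bigPi (i : Fin 3) : G.S i ∈ G.bigPi := by
  fin_cases i
  · exact Or.inl (Or.inl (SuperReg.base (Or.inl rfl)))
  · exact Or.inl (Or.inl (SuperReg.base (Or.inr rfl)))
  · exact Or.inr (SuperReg.base (Or.inr rfl))

private lemma regPair_parent {i j : Fin 3} {R P : G.V} (hR : R ∈ G.regPair i j)
    (hns : ∀ k : Fin 3, R ≠ G.S k) (hP : G.Adj P R) : P ∈ G.regPair i j := by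
  have hR' : SuperReg G.Adj {G.S i, G.S j} R := hR
  cases hR' with
  | base h =>
    rcases h with h | h
    · exact absurd h (hns i)
    · exact absurd h (hns j)
  | step _ hpar => exact hpar P hP

private lemma bigPi_parent {R P : G.V} (hR : R ∈ G.bigPi)
    (hns : ∀ k : Fin 3, R ≠ G.S k) (hP : G.Adj P R) : P ∈ G.bigPi := by
  rcases hR with (h | h) | h
  · exact Or.inl (Or.inl (regPair_parent G h hns hP))
  · exact Or.inl (Or.inr (regPair_parent G h hns hP))
  · exact Or.inr (regPair_parent G h hns hP)

private lemma child_not_bigPi {R C : G.V} (hR : R ∉ G.bigPi) (hAdj : G.Adj R C) :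
    C ∉ G.bigPi := by
  intro hC
  have hns : ∀ k : Fin 3, C ≠ G.S k := fun k h => G.source_no_parent k R (h ▸ hAdj)
  exact hR (bigPi_parent G hC hns hAdj)

private lemma mem_Omega_of (hTS : G.TerminalSeparable) {R : G.V} {j : Fin n}
    (hR : R ∉ G.bigPi) (hreach : G.Reaches R (G.T j)) : R ∈ G.Omega {j} := by
  have hsub : ∀ k : Fin n, G.Reaches R (G.T k) → k = j := by
    intro k hk
    by_contra hkj
    have hI : R ∈ G.Omega {k' | G.Reaches R (G.T k')} := ⟨hR, fun _ => Iff.rfl⟩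
    have hcard : 1 < Set.ncard {k' | G.Reaches R (G.T k')} := by
      rw [Set.one_lt_ncard_iff (Set.toFinite _)]
      exact ⟨k, j, hk, hreach, hkj⟩
    rw [hTS _ hcard] at hI
    exact hI
  exact ⟨hR, fun k => ⟨fun hk => by rw [Set.mem_singleton_iff] at hk; exact hk ▸ hreach,
    fun hk => Set.mem_singleton_iff.mpr (hsub k hk)⟩⟩

private lemma Omega_reaches {R : G.V} {j : Fin n} (h : R ∈ G.Omega {j}) :
    G.Reaches R (G.T j) := (h.2 j).mp rfl

private lemma Omega_unique {R : G.V} {j k : Fin n} (h1 : R ∈ G.Omega {j})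
    (h2 : R ∈ G.Omega {k}) : j = k := by
  have := (h2.2 j).mpr (Omega_reaches G h1)
  rwa [Set.mem_singleton_iff] at this

private lemma parent_cases (hTS : G.TerminalSeparable) {R P : G.V} {j : Fin n}
    (hR : R ∈ G.Omega {j}) (hP : G.Adj P R) : P ∈ G.Lambda {j} ∨ P ∈ G.Omega {j} := by
  by_cases h : P ∈ G.bigPi
  · exact Or.inl ⟨h, R, hP, hR⟩
  · exact Or.inr (mem_Omega_of G hTS h (ReflTransGen.head hP (Omega_reaches G hR)))

private lemma succ_exists (hTS : G.TerminalSeparable) {R : G.V} {j : Fin n}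
    (hR : R ∈ G.Omega {j}) (hRT : R ≠ G.T j) :
    ∃ Cc, G.Adj R Cc ∧ Cc ∈ G.Omega {j} := by
  rcases (Omega_reaches G hR).cases_head with h | ⟨Cc, hAdj, hreach⟩
  · exact absurd h hRT
  · exact ⟨Cc, hAdj, mem_Omega_of G hTS (child_not_bigPi G hR.1 hAdj) hreach⟩

private lemma rtg_comparable {α : Type} {r : α → α → Prop}
    (hdet : ∀ a b b', r a b → r a b' → b = b') {a p q : α}
    (h1 : ReflTransGen r a p) (h2 : ReflTransGen r a q) :
    ReflTransGen r p q ∨ ReflTransGen r q p := by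
  induction h1 with
  | refl => exact Or.inl h2
  | tail hab hstep ih =>
    rcases ih with ih | ih
    · rcases ih.cases_head with heq | ⟨x, hbx, hxq⟩
      · exact Or.inr (heq ▸ ReflTransGen.single hstep)
      · have hx := hdet _ _ _ hbx hstep
        subst hx
        exact Or.inl hxq
    · exact Or.inr (ih.tail hstep)

end Aux

/-- A terminal-separable region graph satisfying Assumption 1 is feasible iff
there is a family `{d_R ∈ F³ : R ∈ Π}` over some finite field `F` satisfying
conditions (1)–(3). -/
theorem feasible_iff_conds123 {n : ℕ} (G : RegionGraph n)
    (hA : G.Assumption1) (hTS : G.TerminalSeparable) :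
    G.Feasible ↔
      ∃ (F : Type) (_ : Field F) (_ : Fintype F) (d : G.V → Fin 3 → F),
        G.Conds123 F d := by
  classical
  haveI := G.fintypeV
  open Relation in
  constructor
  · -- Feasibility implies conditions (1)-(3)
    rintro ⟨F, hF, hFin, d, hcode, hterm⟩
    refine ⟨F, hF, hFin, d, hcode.1, fun R _ hns => hcode.2 R hns, fun j => ?_⟩
    have key : ∀ R, R ∈ G.Omega {j} → d R ∈ Submodule.span F (d '' G.Lambda {j}) := by
      intro R
      refine (adj_wf G).induction
        (C := fun R => R ∈ G.Omega {j} → d R ∈ Submodule.span F (d '' G.Lambda {j}))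
        R (fun x IH hx => ?_)
      have hns : ∀ i : Fin 3, x ≠ G.S i := fun i h => hx.1 (h ▸ source_mem_bigPi G i)
      refine Submodule.span_le.mpr ?_ (hcode.2 x hns)
      rintro _ ⟨P, hP, rfl⟩
      rcases parent_cases G hTS hx hP with h | h
      · exact Submodule.subset_span ⟨P, h, rfl⟩
      · exact IH P hP h
    have hT : G.T j ∈ G.Omega {j} := mem_Omega_of G hTS (hA j) Relation.ReflTransGen.refl
    have := key (G.T j) hT
    rwa [hterm j] at this
  · -- Conditions (1)-(3) imply feasibility
    rintro ⟨F, hF, hFin, d, h1, h2, h3⟩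
    -- extract, for every terminal, a representation of ᾱ over Λ_j together with
    -- chosen children in Ω_j and a successor function inside Ω_j
    have H : ∀ j : Fin n, ∃ (c : (Fin 3 → F) →₀ F) (Q Cc : (Fin 3 → F) → G.V)
        (s : G.V → G.V),
        ((c.sum fun v r => r • v) = fun _ => (1 : F)) ∧
        (∀ v ∈ c.support, Q v ∈ G.Lambda {j} ∧ d (Q v) = v ∧
          G.Adj (Q v) (Cc v) ∧ Cc v ∈ G.Omega {j}) ∧
        (∀ R, R ∈ G.Omega {j} → R ≠ G.T j → G.Adj R (s R) ∧ s R ∈ G.Omega {j}) := by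
      intro j
      obtain ⟨c, hsupp, hsum⟩ := Submodule.mem_span_set.mp (h3 j)
      have hQex : ∀ v : Fin 3 → F, ∃ q cc : G.V, v ∈ c.support →
          q ∈ G.Lambda {j} ∧ d q = v ∧ G.Adj q cc ∧ cc ∈ G.Omega {j} := by
        intro v
        by_cases hv : v ∈ c.support
        · obtain ⟨q, hq, hdq⟩ := hsupp (Finset.mem_coe.mpr hv)
          obtain ⟨hqPi, R, hAdj, hRΩ⟩ := hq
          exact ⟨q, R, fun _ => ⟨⟨hqPi, R, hAdj, hRΩ⟩, hdq, hAdj, hRΩ⟩⟩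
        · exact ⟨G.S 0, G.S 0, fun h => absurd h hv⟩
      choose Q Cc hQC using hQex
      have hsex : ∀ R : G.V, ∃ sR : G.V, R ∈ G.Omega {j} → R ≠ G.T j →
          G.Adj R sR ∧ sR ∈ G.Omega {j} := by
        intro R
        by_cases hR : R ∈ G.Omega {j}
        · by_cases hRT : R = G.T j
          · exact ⟨G.S 0, fun _ h => absurd hRT h⟩
          · obtain ⟨cc, ha, hb⟩ := succ_exists G hTS hR hRT
            exact ⟨cc, fun _ _ => ⟨ha, hb⟩⟩
        · exact ⟨G.S 0, fun h => absurd h hR⟩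
      choose s hsfun using hsex
      exact ⟨c, Q, Cc, s, hsum, hQC, hsfun⟩
    choose c Q Cc s hsum hQ hs using H
    -- the successor relation inside Ω_j
    set sRel : Fin n → G.V → G.V → Prop :=
      fun j a b => b = s j a ∧ a ∈ G.Omega {j} ∧ a ≠ G.T j with hsRel
    have hsAdj : ∀ (j : Fin n) (a b : G.V), sRel j a b → G.Adj a b := by
      rintro j a b ⟨rfl, ha, hat⟩
      exact (hs j a ha hat).1
    have hsΩ : ∀ (j : Fin n) (a b : G.V), sRel j a b → b ∈ G.Omega {j} := by
      rintro j a b ⟨rfl, ha, hat⟩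
      exact (hs j a ha hat).2
    have hdet : ∀ (j : Fin n) (a b b' : G.V), sRel j a b → sRel j a b' → b = b' := by
      rintro j a b b' ⟨rfl, -, -⟩ ⟨rfl, -, -⟩
      rfl
    -- the global assignment
    set D : G.V → Fin 3 → F := fun R =>
      if R ∈ G.bigPi then d R
      else ∑ j : Fin n, ∑ v ∈ (c j).support,
        if Relation.ReflTransGen (sRel j) (Cc j v) R then c j v • v else 0 with hD
    have hDdef : ∀ R : G.V, D R = if R ∈ G.bigPi then d R
        else ∑ j : Fin n, ∑ v ∈ (c j).support,
          if Relation.ReflTransGen (sRel j) (Cc j v) R then c j v • v else 0 :=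
      fun R => rfl
    have hOrbΩ : ∀ (j : Fin n) (v : Fin 3 → F) (R : G.V), v ∈ (c j).support →
        Relation.ReflTransGen (sRel j) (Cc j v) R → R ∈ G.Omega {j} := by
      intro j v R hv h
      induction h with
      | refl => exact (hQ j v hv).2.2.2
      | tail _ hstep _ => exact hsΩ j _ _ hstep
    have hDΩ : ∀ (j : Fin n) (P : G.V), P ∈ G.Omega {j} →
        D P = ∑ v ∈ (c j).support,
          if Relation.ReflTransGen (sRel j) (Cc j v) P then c j v • v else 0 := by
      intro j P hP
      rw [hDdef, if_neg hP.1]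
      refine Finset.sum_eq_single_of_mem j (Finset.mem_univ j)
        (fun j' _ hj' => Finset.sum_eq_zero fun v hv => ?_)
      rw [if_neg]
      intro horb
      exact hj' (Omega_unique G (hOrbΩ j' v P hv horb) hP)
    have hreachT : ∀ (j : Fin n) (R : G.V), R ∈ G.Omega {j} →
        Relation.ReflTransGen (sRel j) R (G.T j) := by
      intro j R
      refine (adj_wf' G).induction
        (C := fun R => R ∈ G.Omega {j} → Relation.ReflTransGen (sRel j) R (G.T j))
        R (fun x IH hx => ?_)
      by_cases hxt : x = G.T j
      · subst hxt
        exact Relation.ReflTransGen.refl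
      · obtain ⟨hadj, hΩ⟩ := hs j x hx hxt
        exact Relation.ReflTransGen.head ⟨rfl, hx, hxt⟩ (IH (s j x) hadj hΩ)
    refine ⟨F, hF, hFin, D, ⟨fun i => ?_, fun v hns => ?_⟩, fun j => ?_⟩
    · -- sources
      rw [hDdef, if_pos (source_mem_bigPi G i)]
      exact h1 i
    · -- coding condition at a non-source vertex v
      by_cases hvPi : v ∈ G.bigPi
      · rw [hDdef, if_pos hvPi]
        have himg : D '' {p | G.Adj p v} = d '' {p | G.Adj p v} := by
          refine Set.image_congr fun p hp => ?_
          rw [hDdef, if_pos (bigPi_parent G hvPi hns hp)]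
        rw [himg]
        exact h2 v hvPi hns
      · by_cases hre : ∃ j : Fin n, G.Reaches v (G.T j)
        · obtain ⟨j, hrj⟩ := hre
          have hv : v ∈ G.Omega {j} := mem_Omega_of G hTS hvPi hrj
          rw [hDΩ j v hv]
          have hsplit : ∀ w ∈ (c j).support,
              (if Relation.ReflTransGen (sRel j) (Cc j w) v then c j w • w else 0)
              = (if Cc j w = v then c j w • w else 0)
                + (if Relation.ReflTransGen (sRel j) (Cc j w) v ∧ Cc j w ≠ v then
                    c j w • w else 0) := by
            intro w hw
            by_cases h0 : Cc j w = v
            · rw [if_pos h0,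
                if_pos (show Relation.ReflTransGen (sRel j) (Cc j w) v by
                  rw [h0]),
                if_neg (fun hc => hc.2 h0)]
              simp
            · rw [if_neg h0]
              by_cases ho : Relation.ReflTransGen (sRel j) (Cc j w) v
              · rw [if_pos ho, if_pos ⟨ho, h0⟩, zero_add]
              · rw [if_neg ho, if_neg (fun hc => ho hc.1), add_zero]
          rw [Finset.sum_congr rfl hsplit, Finset.sum_add_distrib]
          have huniq : ∀ (w : Fin 3 → F) (P P' : G.V),
              Relation.ReflTransGen (sRel j) (Cc j w) P →
              Relation.ReflTransGen (sRel j) (Cc j w) P' →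
              sRel j P v → sRel j P' v → P = P' := by
            intro w P P' hP hP' hrel hrel'
            have key : ∀ P P' : G.V, P ≠ P' → Relation.ReflTransGen (sRel j) P P' →
                sRel j P v → sRel j P' v → False := by
              intro P P' hne h hrel hrel'
              rcases h.cases_head with heq | ⟨x, hPx, hxP'⟩
              · exact hne heq
              · have hx : x = v := hdet j P x v hPx hrel
                rw [hx] at hxP'
                have hvp : Relation.ReflTransGen G.Adj v P' :=
                  Relation.ReflTransGen.mono (fun a b h => hsAdj j a b h) _ _ hxP'
                exact G.acyclic v (Relation.TransGen.tail' hvp (hsAdj j P' v hrel'))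
            by_contra hne
            rcases rtg_comparable (hdet j) hP hP' with hcomp | hcomp
            · exact key P P' hne hcomp hrel hrel'
            · exact key P' P (Ne.symm hne) hcomp hrel' hrel
          apply Submodule.add_mem
          · -- direct contributions from parents in Λ_j
            refine Submodule.sum_mem _ fun w hw => ?_
            by_cases h0 : Cc j w = v
            · rw [if_pos h0]
              obtain ⟨hQΛ, hdQ, hQAdj, -⟩ := hQ j w hw
              have hDQ : D (Q j w) = w := by
                rw [hDdef, if_pos hQΛ.1, hdQ]
              exact Submodule.smul_mem _ _
                (Submodule.subset_span ⟨Q j w, h0 ▸ hQAdj, hDQ⟩)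
            · rw [if_neg h0]
              exact Submodule.zero_mem _
          · -- indirect contributions through parents in Ω_j
            have hpoint : ∀ w ∈ (c j).support,
                (if Relation.ReflTransGen (sRel j) (Cc j w) v ∧ Cc j w ≠ v then
                  c j w • w else 0)
                = ∑ P ∈ Finset.univ.filter (fun P => sRel j P v),
                    (if Relation.ReflTransGen (sRel j) (Cc j w) P then
                      c j w • w else 0) := by
              intro w hw
              by_cases hcond : Relation.ReflTransGen (sRel j) (Cc j w) v ∧ Cc j w ≠ v
              · rw [if_pos hcond]
                rcases hcond.1.cases_tail with heq | ⟨P0, hP0orb, hP0rel⟩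
                · exact absurd heq.symm hcond.2
                · rw [Finset.sum_eq_single_of_mem P0
                    (Finset.mem_filter.mpr ⟨Finset.mem_univ _, hP0rel⟩)
                    (fun P hPmem hPne => ?_), if_pos hP0orb]
                  rw [if_neg]
                  intro horbP
                  exact hPne (huniq w P P0 horbP hP0orb
                    (Finset.mem_filter.mp hPmem).2 hP0rel)
              · rw [if_neg hcond]
                symm
                refine Finset.sum_eq_zero fun P hPmem => ?_
                rw [if_neg]
                intro horb
                have hrel := (Finset.mem_filter.mp hPmem).2
                apply hcond
                refine ⟨horb.tail hrel, fun hCv => ?_⟩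
                rw [hCv] at horb
                have hvp : Relation.ReflTransGen G.Adj v P :=
                  Relation.ReflTransGen.mono (fun a b h => hsAdj j a b h) _ _ horb
                exact G.acyclic v (Relation.TransGen.tail' hvp (hsAdj j P v hrel))
            rw [Finset.sum_congr rfl hpoint, Finset.sum_comm]
            refine Submodule.sum_mem _ fun P hPmem => ?_
            have hrel := (Finset.mem_filter.mp hPmem).2
            have hPΩ : P ∈ G.Omega {j} := hrel.2.1
            rw [← hDΩ j P hPΩ]
            exact Submodule.subset_span ⟨P, hsAdj j P v hrel, rfl⟩
        · -- v reaches no terminal : D v = 0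
          have hD0 : D v = 0 := by
            rw [hDdef, if_neg hvPi]
            refine Finset.sum_eq_zero fun j _ => Finset.sum_eq_zero fun w hw => ?_
            rw [if_neg]
            intro horb
            exact hre ⟨j, Omega_reaches G (hOrbΩ j w v hw horb)⟩
          rw [hD0]
          exact Submodule.zero_mem _
    · -- terminals
      have hT : G.T j ∈ G.Omega {j} := mem_Omega_of G hTS (hA j) Relation.ReflTransGen.refl
      rw [hDΩ j (G.T j) hT]
      have hall : ∀ w ∈ (c j).support,
          (if Relation.ReflTransGen (sRel j) (Cc j w) (G.T j) then c j w • w else 0)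
          = c j w • w := fun w hw =>
        if_pos (hreachT j (Cc j w) ((hQ j w hw).2.2.2))
      rw [Finset.sum_congr rfl hall]
      simpa [Finsupp.sum] using hsum j

end SumNetworksPaper
end

section
/- Let RG be a region graph, let {i_1,i_2} ⊆ {1,2,3}, and let {Δ_1,…,Δ_K} be a partition of reg(S_{i_1},S_{i_2}) such that reg(Δ_i) = Δ_i for i = 1,…,K. Let {d_R ∈ span{α_{i_1}, α_{i_2}} : R ∈ reg(S_{i_1},S_{i_2})} be a family of vectors over a finite field F such that: (1) if R and R' lie in a common Δ_i then d_R = d_{R'}; (2) if R and R' lie in no common Δ_i then d_R and d_{R'} are linearly independent. Then d_R ∈ span{d_{R'} : R' ∈ In(R)} for every R ∈ reg°(S_{i_1},S_{i_2}). -/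
namespace SumNetworksPaper

/-- Two independent vectors in the span of a pair span everything in that span. -/
theorem pair_span_mem (F : Type) [Field F] (a b x u v : Fin 3 → F)
    (ha : a ∈ Submodule.span F ({u, v} : Set (Fin 3 → F)))
    (hb : b ∈ Submodule.span F ({u, v} : Set (Fin 3 → F)))
    (hx : x ∈ Submodule.span F ({u, v} : Set (Fin 3 → F)))
    (hind : LinearIndependent F ![a, b]) :
    x ∈ Submodule.span F ({a, b} : Set (Fin 3 → F)) := by
  classical
  have hsub : Submodule.span F ({a, b} : Set (Fin 3 → F)) ≤
      Submodule.span F ({u, v} : Set (Fin 3 → F)) := by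
    apply Submodule.span_le.2
    rintro y (rfl | rfl)
    · exact ha
    · exact hb
  have hrange : Set.range ![a, b] = ({a, b} : Set (Fin 3 → F)) := by
    simp [Matrix.range_cons, Matrix.range_empty, Set.insert_union]
    exact Set.pair_comm b a
  have h2 : Module.finrank F (Submodule.span F ({a, b} : Set (Fin 3 → F))) = 2 := by
    rw [← hrange, finrank_span_eq_card hind]
    simp
  haveI : Fintype ({u, v} : Set (Fin 3 → F)) :=
    ((Set.finite_singleton v).insert u).fintype
  have hle : Module.finrank F (Submodule.span F ({u, v} : Set (Fin 3 → F))) ≤ 2 := by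
    calc Module.finrank F (Submodule.span F ({u, v} : Set (Fin 3 → F))) ≤
        ({u, v} : Set (Fin 3 → F)).toFinset.card := finrank_span_le_card _
      _ ≤ 2 := by
        rw [Set.toFinset_insert, Set.toFinset_singleton]
        exact (Finset.card_insert_le _ _).trans (by simp)
  have heq := Submodule.eq_of_le_of_finrank_le hsub (by omega)
  rw [heq]; exact hx

/-- Lemma on weak decomposition codes: for a partition of `reg(S_{i₁},S_{i₂})`
into super-region-closed classes and a family of vectors constant on classes
and pairwise independent across classes, every `R ∈ reg°(S_{i₁},S_{i₂})`
satisfies `d_R ∈ span{d_{R'} : R' ∈ In(R)}`. -/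
theorem weak_decomposition_code {n : ℕ} (G : RegionGraph n)
    (i₁ i₂ : Fin 3) (hne : i₁ ≠ i₂)
    (F : Type) [Field F] [Fintype F]
    (P : Set (Set G.V))
    (hP1 : ∀ Δ ∈ P, Δ.Nonempty ∧ Δ ⊆ G.regPair i₁ i₂)
    (hP2 : ⋃₀ P = G.regPair i₁ i₂)
    (hP3 : ∀ Δ ∈ P, ∀ Δ' ∈ P, Δ ≠ Δ' → Δ ∩ Δ' = ∅)
    (hPreg : ∀ Δ ∈ P, G.reg Δ = Δ)
    (d : G.V → Fin 3 → F)
    (hdmem : ∀ R ∈ G.regPair i₁ i₂,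
      d R ∈ Submodule.span F ({Pi.single i₁ 1, Pi.single i₂ 1} : Set (Fin 3 → F)))
    (hsame : ∀ Δ ∈ P, ∀ R ∈ Δ, ∀ R' ∈ Δ, d R = d R')
    (hindep : ∀ R ∈ G.regPair i₁ i₂, ∀ R' ∈ G.regPair i₁ i₂,
      (∀ Δ ∈ P, ¬ (R ∈ Δ ∧ R' ∈ Δ)) → LinearIndependent F ![d R, d R']) :
    ∀ R ∈ G.regO {G.S i₁, G.S i₂},
      d R ∈ Submodule.span F (d '' {p | G.Adj p R}) := by
  rintro R ⟨hRreg, hRnot⟩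
  -- R is in the super region but not a source, so it arises by a `step`.
  have hstep : (∃ p, G.Adj p R) ∧ ∀ p, G.Adj p R → p ∈ G.regPair i₁ i₂ := by
    cases hRreg with
    | base h => exact absurd h hRnot
    | step hex hall => exact ⟨hex, fun p hp => hall p hp⟩
  obtain ⟨⟨p₀, hp₀⟩, hpar⟩ := hstep
  -- R belongs to some class Δ.
  have hRpair : R ∈ G.regPair i₁ i₂ := hRreg
  have hRΔ : ∃ Δ ∈ P, R ∈ Δ := by
    have : R ∈ ⋃₀ P := hP2 ▸ hRpair
    obtain ⟨Δ, hΔ, hR⟩ := this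
    exact ⟨Δ, hΔ, hR⟩
  obtain ⟨Δ, hΔP, hRΔ⟩ := hRΔ
  by_cases hcase : ∃ p, G.Adj p R ∧ p ∈ Δ
  · -- a parent in the same class: d R = d p ∈ span of parents.
    obtain ⟨p, hp, hpΔ⟩ := hcase
    have : d R = d p := hsame Δ hΔP R hRΔ p hpΔ
    rw [this]
    exact Submodule.subset_span ⟨p, hp, rfl⟩
  · push_neg at hcase
    -- every parent lies in some class ≠ Δ
    have hparclass : ∀ p, G.Adj p R → ∃ Δ' ∈ P, p ∈ Δ' ∧ Δ' ≠ Δ := by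
      intro p hp
      have : p ∈ ⋃₀ P := hP2 ▸ hpar p hp
      obtain ⟨Δ', hΔ', hpΔ'⟩ := this
      refine ⟨Δ', hΔ', hpΔ', ?_⟩
      rintro rfl
      exact hcase p hp hpΔ'
    obtain ⟨Δ₁, hΔ₁P, hp₀Δ₁, hΔ₁ne⟩ := hparclass p₀ hp₀
    -- not all parents can lie in Δ₁, else R ∈ reg Δ₁ = Δ₁, contradicting disjointness
    have hnotall : ¬ ∀ p, G.Adj p R → p ∈ Δ₁ := by
      intro hall
      have hRreg1 : R ∈ G.reg Δ₁ :=
        SuperReg.step ⟨p₀, hp₀⟩ (fun p hp => SuperReg.base (hall p hp))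
      rw [hPreg Δ₁ hΔ₁P] at hRreg1
      have := hP3 Δ hΔP Δ₁ hΔ₁P (Ne.symm hΔ₁ne)
      exact Set.eq_empty_iff_forall_notMem.mp this R ⟨hRΔ, hRreg1⟩
    push_neg at hnotall
    obtain ⟨p₁, hp₁, hp₁not⟩ := hnotall
    obtain ⟨Δ₂, hΔ₂P, hp₁Δ₂, _⟩ := hparclass p₁ hp₁
    have hΔ₁₂ : Δ₁ ≠ Δ₂ := by
      rintro rfl; exact hp₁not hp₁Δ₂
    -- d p₀ and d p₁ are linearly independent
    have hind : LinearIndependent F ![d p₀, d p₁] := by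
      apply hindep p₀ (hpar p₀ hp₀) p₁ (hpar p₁ hp₁)
      intro Δ' hΔ' ⟨h0, h1⟩
      have e1 : Δ' = Δ₁ := by
        by_contra hne
        have := hP3 Δ' hΔ' Δ₁ hΔ₁P hne
        exact Set.eq_empty_iff_forall_notMem.mp this p₀ ⟨h0, hp₀Δ₁⟩
      have e2 : Δ' = Δ₂ := by
        by_contra hne
        have := hP3 Δ' hΔ' Δ₂ hΔ₂P hne
        exact Set.eq_empty_iff_forall_notMem.mp this p₁ ⟨h1, hp₁Δ₂⟩
      exact hΔ₁₂ (e1 ▸ e2)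
    -- d R ∈ span {d p₀, d p₁} ⊆ span of parents' image
    have hmem : d R ∈ Submodule.span F ({d p₀, d p₁} : Set (Fin 3 → F)) :=
      pair_span_mem F (d p₀) (d p₁) (d R) (Pi.single i₁ 1) (Pi.single i₂ 1)
        (hdmem p₀ (hpar p₀ hp₀)) (hdmem p₁ (hpar p₁ hp₁)) (hdmem R hRpair) hind
    refine Submodule.span_mono ?_ hmem
    rintro y (rfl | rfl)
    · exact ⟨p₀, hp₀, rfl⟩
    · exact ⟨p₁, hp₁, rfl⟩

end SumNetworksPaper
end

section
/- Let RG be a region graph satisfying Assumption 1 that is terminal-separable, and let {d_R ∈ F^3 : R ∈ Π} satisfy conditions (1)–(3) with d_R ≠ 0 for all R ∈ Π. Let 𝓘 be a partition of Π whose classes contain the three sources in three distinct classes, and let Δ be a class of 𝓘 satisfying Property (a). Then for every {i_1,i_2} ⊆ {1,2,3} and every pair Q, Q' ∈ Δ_{i_1,i_2}, d_{Q'} ∈ span{d_Q}; moreover, for every subclass [[Δ]] of Δ and every pair Q, Q' ∈ [[Δ]], d_{Q'} ∈ span{d_Q}. -/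
namespace SumNetworksPaper

lemma exists_third : ∀ i j : Fin 3, i ≠ j → ∃ k : Fin 3, k ≠ i ∧ k ≠ j := by decide

lemma RegionGraph.regPair_comm_s13 {n : ℕ} (G : RegionGraph n) (i j : Fin 3) :
    G.regPair i j = G.regPair j i := by
  unfold RegionGraph.regPair
  rw [Set.pair_comm]

lemma RegionGraph.regPair_subset_bigPi_s13 {n : ℕ} (G : RegionGraph n) {i j : Fin 3}
    (hij : i ≠ j) : G.regPair i j ⊆ G.bigPi := by
  have h01 : G.regPair 0 1 ⊆ G.bigPi := fun x hx => Or.inl (Or.inl hx)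
  have h02 : G.regPair 0 2 ⊆ G.bigPi := fun x hx => Or.inl (Or.inr hx)
  have h12 : G.regPair 1 2 ⊆ G.bigPi := fun x hx => Or.inr hx
  fin_cases i <;> fin_cases j <;>
    first
      | exact absurd rfl hij
      | assumption
      | (rw [G.regPair_comm_s13]; assumption)

lemma RegionGraph.coord_zero {n : ℕ} (G : RegionGraph n) {F : Type} [Field F]
    {d : G.V → Fin 3 → F} (hd : G.Conds123 F d) {i j k : Fin 3} (hij : i ≠ j)
    (hki : k ≠ i) (hkj : k ≠ j) {Q : G.V} (hQ : Q ∈ G.regPair i j) : d Q k = 0 := by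
  have hQ' : SuperReg G.Adj {G.S i, G.S j} Q := hQ
  clear hQ
  induction hQ' with
  | base h =>
    rcases h with h | h
    · rw [h, hd.1 i, Pi.single_eq_of_ne hki]
    · rw [h, hd.1 j, Pi.single_eq_of_ne hkj]
  | @step R hex hall ih =>
    have hmem : R ∈ G.bigPi := G.regPair_subset_bigPi_s13 hij (SuperReg.step hex hall)
    have hns : ∀ i' : Fin 3, R ≠ G.S i' := by
      intro i' h
      obtain ⟨P, hP⟩ := hex
      exact G.source_no_parent i' P (h ▸ hP)
    have hsp := hd.2.1 R hmem hns
    have hsub : Submodule.span F (d '' {p | G.Adj p R}) ≤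
        LinearMap.ker (LinearMap.proj k : (Fin 3 → F) →ₗ[F] F) := by
      rw [Submodule.span_le]
      rintro v ⟨P, hP, rfl⟩
      simpa using ih P hP
    simpa using hsub hsp

/-- From membership in `span {e, 1}` together with a vanishing coordinate where
`e` also vanishes, deduce membership in `span {e}` with an explicit scalar. -/
lemma span_pair_coord {F : Type} [Field F] {v e : Fin 3 → F} {k : Fin 3}
    (h : v ∈ Submodule.span F {e, fun _ => (1 : F)}) (hek : e k = 0) (hvk : v k = 0) :
    ∃ a : F, v = a • e := by
  obtain ⟨a, b, hab⟩ := Submodule.mem_span_pair.mp h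
  have h1 := congrFun hab k
  simp only [Pi.add_apply, Pi.smul_apply, smul_eq_mul, hek, hvk, mul_zero, mul_one,
    zero_add] at h1
  refine ⟨a, ?_⟩
  rw [← hab, h1]
  simp

/-- If a class `Δ` of a partition of `Π` satisfies Property (a), then within
every `Δ_{i₁,i₂}` and within every subclass of `Δ`, all vectors are scalar
multiples of each other. -/
theorem propertyA_subclass_span {n : ℕ} (G : RegionGraph n)
    (hA : G.Assumption1) (hTS : G.TerminalSeparable)
    (F : Type) [Field F] [Fintype F] (d : G.V → Fin 3 → F)
    (hd : G.Conds123 F d) (hnz : ∀ R ∈ G.bigPi, d R ≠ 0)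
    (I : Set (Set G.V)) (hpart : G.IsPartitionOfPi I)
    (hsep : G.SourcesSeparated I)
    (Δ : Set G.V) (hΔ : Δ ∈ I) (hPa : G.PropertyA F d Δ) :
    (∀ i₁ i₂ : Fin 3, i₁ ≠ i₂ →
      ∀ Q ∈ Δ ∩ G.regPair i₁ i₂, ∀ Q' ∈ Δ ∩ G.regPair i₁ i₂,
        d Q' ∈ Submodule.span F {d Q}) ∧
    (∀ X : Set G.V, G.IsSubclass Δ X →
      ∀ Q ∈ X, ∀ Q' ∈ X, d Q' ∈ Submodule.span F {d Q}) := by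
  have hΔsub : Δ ⊆ G.bigPi := (hpart.1 Δ hΔ).2
  have part1 : ∀ i₁ i₂ : Fin 3, i₁ ≠ i₂ →
      ∀ Q ∈ Δ ∩ G.regPair i₁ i₂, ∀ Q' ∈ Δ ∩ G.regPair i₁ i₂,
        d Q' ∈ Submodule.span F {d Q} := by
    intro i₁ i₂ h12 Q hQ Q' hQ'
    obtain ⟨k, hk1, hk2⟩ := exists_third i₁ i₂ h12
    have hzQ : d Q k = 0 := G.coord_zero hd h12 hk1 hk2 hQ.2
    have hzQ' : d Q' k = 0 := G.coord_zero hd h12 hk1 hk2 hQ'.2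
    obtain ⟨a, ha⟩ := span_pair_coord (hPa Q hQ.1 Q' hQ'.1) hzQ hzQ'
    exact Submodule.mem_span_singleton.mpr ⟨a, ha.symm⟩
  refine ⟨part1, ?_⟩
  intro X hX Q hQ Q' hQ'
  rcases hX with ⟨i, hSi, hXsrc | ⟨j, k, hjk, hji, hki, hXpair⟩⟩ | ⟨_, i, j, hij, hXpair⟩
  · -- X = srcSub i Δ
    rw [hXsrc] at hQ hQ'
    -- every element of srcSub is a nonzero multiple of `Pi.single i 1`
    have key : ∀ P ∈ G.srcSub i Δ, ∃ a : F, a ≠ 0 ∧ d P = a • (Pi.single i 1 : Fin 3 → F) := by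
      intro P hP
      obtain ⟨hPΔ, hPU⟩ := hP
      obtain ⟨j, hjU⟩ := Set.mem_iUnion.mp hPU
      obtain ⟨hji', hPpair⟩ := Set.mem_iUnion.mp hjU
      have hij' : i ≠ j := fun h => hji' h.symm
      obtain ⟨k, hk1, hk2⟩ := exists_third i j hij'
      have hzP : d P k = 0 := G.coord_zero hd hij' hk1 hk2 hPpair
      have hsp : d P ∈ Submodule.span F {d (G.S i), fun _ => (1 : F)} :=
        hPa (G.S i) hSi P hPΔ
      rw [hd.1 i] at hsp
      have hzE : (Pi.single i 1 : Fin 3 → F) k = 0 := Pi.single_eq_of_ne hk1 1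
      obtain ⟨a, ha⟩ := span_pair_coord hsp hzE hzP
      refine ⟨a, ?_, ha⟩
      intro h0
      apply hnz P (hΔsub hPΔ)
      rw [ha, h0, zero_smul]
    obtain ⟨a, ha0, ha⟩ := key Q hQ
    obtain ⟨a', _, ha'⟩ := key Q' hQ'
    refine Submodule.mem_span_singleton.mpr ⟨a' * a⁻¹, ?_⟩
    rw [ha, ha', smul_smul, mul_assoc, inv_mul_cancel₀ ha0, mul_one]
  · rw [hXpair] at hQ hQ'
    exact part1 j k hjk Q hQ Q' hQ'
  · rw [hXpair] at hQ hQ'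
    exact part1 i j hij Q hQ Q' hQ'

end SumNetworksPaper
end
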